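/- arXiv:1205.4126 — 3 statements merged into one kernel-verified Lean document; each statement's English description precedes it below -/
import Mathlib

section
/- Let ξ be Rayleigh with parameter √λ₂, let T₂ = (2/(γ₁λ₂))·√(ξ² − 2γ₁λ₂(γ₂−γ₁)) when ξ² > 2γ₁λ₂(γ₂−γ₁) and T₂ = 0 otherwise, with γ₂ ≥ γ₁ > 0. Then, conditioning on ξ ≥ γ₁λ₂τ₁/2, P(T₂ = 0) = 1(τ₁ ≤ τ₁*)·[1 − exp(−V(τ₁*)²)/exp(−Vτ₁²)], where V = γ₁²λ₂/8 and τ₁* = √(8(γ₂−γ₁)/(γ₁λ₂)). -/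
/-!
On `{ξ ≥ a}` with `a = γ₁λ₂τ₁/2 ≥ 0`, the event `T₂ = 0`, i.e. `ξ² ≤ 2γ₁λ₂(γ₂ - γ₁)`, is
`a ≤ ξ ≤ b` with `b = √(2γ₁λ₂(γ₂ - γ₁)) = γ₁λ₂τ₁*/2`. Its conditional probability is a ratio of
Rayleigh tails, `(e^{-a²/2λ₂} - e^{-b²/2λ₂}) / e^{-a²/2λ₂}` when `a ≤ b` and `0` otherwise.
The Rayleigh cdf is continuous, so `ξ` has no atoms and `ℙ(ξ ≥ a) = ℙ(ξ > a)`.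
-/

open MeasureTheory ProbabilityTheory Real

lemma measure_singleton_eq_zero_of_continuousAt_cdf {μ : Measure ℝ} [IsProbabilityMeasure μ]
    {x : ℝ} (h : ContinuousAt (cdf μ) x) : μ {x} = 0 := by
  rw [← measure_cdf μ, StieltjesFunction.measure_singleton,
    h.continuousWithinAt.leftLim_eq, sub_self, ENNReal.ofReal_zero]

lemma exp_neg_sq_div_le_one {lam : ℝ} (hlam : 0 ≤ lam) (x : ℝ) :
    exp (-(x ^ 2) / (2 * lam)) ≤ 1 := by
  rw [exp_le_one_iff, neg_div]
  exact neg_nonpos.mpr (by positivity)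

/-- `lam` is the squared scale `σ²` of the Rayleigh law, i.e. `λ₂` for parameter `√λ₂`. -/
def HasRayleighCDF {Ω : Type*} [MeasurableSpace Ω] (μ : Measure Ω) (ξ : Ω → ℝ) (lam : ℝ) :
    Prop :=
  ∀ x, 0 ≤ x → μ {ω | ξ ω ≤ x} = ENNReal.ofReal (1 - exp (-(x ^ 2) / (2 * lam)))

namespace HasRayleighCDF

variable {Ω : Type*} [MeasurableSpace Ω] {μ : Measure Ω} [IsProbabilityMeasure μ]
  {ξ : Ω → ℝ} {lam : ℝ}

lemma cdf_map_eq (hcdf : HasRayleighCDF μ ξ lam) (hξ : Measurable ξ) (hlam : 0 ≤ lam)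
    (x : ℝ) : cdf (μ.map ξ) x = 1 - exp (-(max x 0 ^ 2) / (2 * lam)) := by
  have := Measure.isProbabilityMeasure_map (μ := μ) hξ.aemeasurable
  rw [cdf_eq_real, measureReal_def, Measure.map_apply hξ measurableSet_Iic]
  change (μ {ω | ξ ω ≤ x}).toReal = _
  rcases le_total 0 x with hx | hx
  · rw [max_eq_left hx, hcdf x hx,
      ENNReal.toReal_ofReal (sub_nonneg.mpr (exp_neg_sq_div_le_one hlam x))]
  · have hnull : μ {ω | ξ ω ≤ x} = 0 := by
      refine measure_mono_null (t := {ω | ξ ω ≤ 0}) (fun ω hω => hω.out.trans hx) ?_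
      simp [hcdf 0 le_rfl]
    rw [hnull, max_eq_right hx]
    simp

lemma measure_eq_zero (hcdf : HasRayleighCDF μ ξ lam) (hξ : Measurable ξ) (hlam : 0 ≤ lam)
    (x : ℝ) : μ {ω | ξ ω = x} = 0 := by
  have := Measure.isProbabilityMeasure_map (μ := μ) hξ.aemeasurable
  have hcont : Continuous (cdf (μ.map ξ)) := by
    rw [funext (hcdf.cdf_map_eq hξ hlam)]
    fun_prop
  rw [← measure_singleton_eq_zero_of_continuousAt_cdf hcont.continuousAt,
    Measure.map_apply hξ (measurableSet_singleton x)]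
  rfl

lemma measure_lt_eq (hcdf : HasRayleighCDF μ ξ lam) (hξ : Measurable ξ) (hlam : 0 ≤ lam)
    {x : ℝ} (hx : 0 ≤ x) : μ {ω | x < ξ ω} = ENNReal.ofReal (exp (-(x ^ 2) / (2 * lam))) := by
  have hcompl : {ω | x < ξ ω} = {ω | ξ ω ≤ x}ᶜ := by ext ω; simp
  rw [hcompl, prob_compl_eq_one_sub (measurableSet_le hξ measurable_const), hcdf x hx,
    ← ENNReal.ofReal_one, ← ENNReal.ofReal_sub _ (sub_nonneg.mpr (exp_neg_sq_div_le_one hlam x)), sub_sub_cancel]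

lemma measure_le_eq (hcdf : HasRayleighCDF μ ξ lam) (hξ : Measurable ξ) (hlam : 0 ≤ lam)
    {x : ℝ} (hx : 0 ≤ x) : μ {ω | x ≤ ξ ω} = ENNReal.ofReal (exp (-(x ^ 2) / (2 * lam))) := by
  have hdiff : {ω | x < ξ ω} = {ω | x ≤ ξ ω} \ {ω | ξ ω = x} := by
    ext ω; simp [lt_iff_le_and_ne, eq_comm]
  rw [← hcdf.measure_lt_eq hξ hlam hx, hdiff,
    measure_sdiff_null (hcdf.measure_eq_zero hξ hlam x)]

lemma measure_Icc_eq (hcdf : HasRayleighCDF μ ξ lam) (hξ : Measurable ξ) (hlam : 0 ≤ lam)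
    {a b : ℝ} (ha : 0 ≤ a) (hab : a ≤ b) :
    μ ({ω | a ≤ ξ ω} ∩ {ω | ξ ω ≤ b}) =
      ENNReal.ofReal (exp (-(a ^ 2) / (2 * lam)) - exp (-(b ^ 2) / (2 * lam))) := by
  have hdiff : {ω | a ≤ ξ ω} ∩ {ω | ξ ω ≤ b} = {ω | a ≤ ξ ω} \ {ω | b < ξ ω} := by
    ext ω; simp
  have hsub : {ω | b < ξ ω} ⊆ {ω | a ≤ ξ ω} := fun ω hω => hab.trans hω.out.le
  rw [hdiff, measure_sdiff hsub (measurableSet_lt measurable_const hξ).nullMeasurableSet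
    (measure_ne_top _ _), hcdf.measure_le_eq hξ hlam ha,
    hcdf.measure_lt_eq hξ hlam (ha.trans hab), ENNReal.ofReal_sub _ (exp_nonneg _)]

lemma cond_sq_le (hcdf : HasRayleighCDF μ ξ lam) (hξ : Measurable ξ) (hlam : 0 ≤ lam)
    {a c : ℝ} (ha : 0 ≤ a) (hc : 0 ≤ c) :
    μ[{ω | ξ ω ^ 2 ≤ c} | {ω | a ≤ ξ ω}] = ENNReal.ofReal
      (if a ^ 2 ≤ c then 1 - exp (-c / (2 * lam)) / exp (-(a ^ 2) / (2 * lam)) else 0) := by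
  have hinter : {ω | a ≤ ξ ω} ∩ {ω | ξ ω ^ 2 ≤ c} = {ω | a ≤ ξ ω} ∩ {ω | ξ ω ≤ √c} := by
    ext ω
    simp only [Set.mem_inter_iff, Set.mem_ofPred_eq, and_congr_right_iff]
    exact fun h => (Real.le_sqrt (ha.trans h) hc).symm
  rw [cond_apply (measurableSet_le measurable_const hξ), hinter,
    hcdf.measure_le_eq hξ hlam ha]
  split_ifs with hac
  · rw [hcdf.measure_Icc_eq hξ hlam ha ((Real.le_sqrt ha hc).mpr hac),
      Real.sq_sqrt hc, ← ENNReal.div_eq_inv_mul, ← ENNReal.ofReal_div_of_pos (exp_pos _),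
      sub_div, div_self (exp_ne_zero _)]
  · have hempty : {ω | a ≤ ξ ω} ∩ {ω | ξ ω ≤ √c} = ∅ := by
      ext ω
      simp only [Set.mem_inter_iff, Set.mem_ofPred_eq, Set.mem_empty_iff_false, iff_false,
        not_and, not_le]
      exact fun h => (not_le.mp (mt (Real.le_sqrt ha hc).mp hac)).trans_le h
    rw [hempty, measure_empty, mul_zero, ENNReal.ofReal_zero]

end HasRayleighCDF

lemma ite_mul_sqrt_sub_eq_zero_iff {k c y : ℝ} (hk : 0 < k) :
    (if y > c then k * √(y - c) else 0) = 0 ↔ y ≤ c := by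
  split_ifs with h
  · simp [hk.ne', Real.sqrt_eq_zero']
  · simpa using h

/-- Equation (15): the atom at 0 of the conditional length T₂ of the successive
excursion above γ₂, given an excursion above γ₁ of length ≥ τ₁. -/
theorem cond_prob_T2_eq_zero {Ω : Type*} [MeasureSpace Ω]
    [IsProbabilityMeasure (ℙ : Measure Ω)]
    (lam2 γ₁ γ₂ τ₁ : ℝ) (hlam2 : 0 < lam2) (hγ₁ : 0 < γ₁) (hγ₂ : γ₁ ≤ γ₂) (hτ₁ : 0 ≤ τ₁)
    (ξ : Ω → ℝ) (hmeas : Measurable ξ)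
    (hcdf : ∀ x : ℝ, 0 ≤ x →
      ℙ {ω | ξ ω ≤ x} = ENNReal.ofReal (1 - Real.exp (-(x ^ 2) / (2 * lam2))))
    (T₂ : Ω → ℝ)
    (hT₂ : ∀ ω, T₂ ω =
      if (ξ ω) ^ 2 > 2 * γ₁ * lam2 * (γ₂ - γ₁) then
        2 / (γ₁ * lam2) * Real.sqrt ((ξ ω) ^ 2 - 2 * γ₁ * lam2 * (γ₂ - γ₁))
      else 0)
    (V τ₁star : ℝ) (hV : V = γ₁ ^ 2 * lam2 / 8)
    (hτ₁star : τ₁star = Real.sqrt (8 * (γ₂ - γ₁) / (γ₁ * lam2))) :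
    ℙ[{ω | T₂ ω = 0} | {ω | γ₁ * lam2 * τ₁ / 2 ≤ ξ ω}] =
      ENNReal.ofReal
        (if τ₁ ≤ τ₁star then
          1 - Real.exp (-V * τ₁star ^ 2) / Real.exp (-V * τ₁ ^ 2)
        else 0) := by
  have hγlam : 0 < γ₁ * lam2 := mul_pos hγ₁ hlam2
  have hγ : 0 ≤ γ₂ - γ₁ := sub_nonneg.mpr hγ₂
  have hevent : {ω | T₂ ω = 0} = {ω | ξ ω ^ 2 ≤ 2 * γ₁ * lam2 * (γ₂ - γ₁)} := by
    ext ω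
    simp only [Set.mem_ofPred_eq, hT₂ ω]
    exact ite_mul_sqrt_sub_eq_zero_iff (by positivity)
  have hτ₁star_sq : τ₁star ^ 2 = 8 * (γ₂ - γ₁) / (γ₁ * lam2) := by
    rw [hτ₁star, Real.sq_sqrt (by positivity)]
  have hthreshold : (γ₁ * lam2 * τ₁ / 2) ^ 2 ≤ 2 * γ₁ * lam2 * (γ₂ - γ₁) ↔ τ₁ ≤ τ₁star := by
    rw [hτ₁star, Real.le_sqrt hτ₁ (by positivity), le_div_iff₀ hγlam]
    constructor <;> intro h <;> nlinarith
  have hexp_τ₁ : -((γ₁ * lam2 * τ₁ / 2) ^ 2) / (2 * lam2) = -V * τ₁ ^ 2 := by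
    rw [hV]; field_simp; ring
  have hexp_τ₁star : -(2 * γ₁ * lam2 * (γ₂ - γ₁)) / (2 * lam2) = -V * τ₁star ^ 2 := by
    rw [hV, hτ₁star_sq]; field_simp
  rw [hevent, HasRayleighCDF.cond_sq_le hcdf hmeas hlam2.le (by positivity) (by positivity),
    hexp_τ₁, hexp_τ₁star]
  simp only [hthreshold]
end

section
/- Let ξ be Rayleigh with parameter √λ₂, γ₂ ≥ γ₁ > 0, τ₁ ≥ 0, V = γ₁²λ₂/8, τ₁* = √(8(γ₂−γ₁)/(γ₁λ₂)), and T₂ = (2/(γ₁λ₂))·√(max{ξ² − 2γ₁λ₂(γ₂−γ₁), 0}). Then for every τ ≥ 0, P(T₂ > τ | ξ ≥ γ₁λ₂τ₁/2) = exp(−V·max{τ² + (τ₁*)², τ₁²}) / exp(−V τ₁²). -/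
/-!
Write a = γ₁λ₂/2, so that 2γ₁λ₂(γ₂ - γ₁) = a²τ₁*² and V = a²/(2λ₂). For ξ ≥ 0 the event
T₂ > τ is ξ > a√(τ² + τ₁*²), so intersected with the conditioning event ξ ≥ aτ₁ it is a single
Rayleigh tail at the larger of the two thresholds. Since P(ξ ≥ a x) = exp(-V x²), the conditional
probability is the stated ratio of exponentials.
-/

open MeasureTheory ProbabilityTheory Real Set Filter Topology

noncomputable def rayleighSurvival (lam x : ℝ) : ℝ := exp (-(x ^ 2) / (2 * lam))

lemma rayleighSurvival_le_one {lam : ℝ} (hlam : 0 ≤ lam) (x : ℝ) : rayleighSurvival lam x ≤ 1 :=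
  exp_le_one_iff.mpr (div_nonpos_of_nonpos_of_nonneg (neg_nonpos.mpr (sq_nonneg x)) (by positivity))

lemma continuous_rayleighSurvival (lam : ℝ) : Continuous (rayleighSurvival lam) := by
  unfold rayleighSurvival; fun_prop

lemma rayleighSurvival_zero (lam : ℝ) : rayleighSurvival lam 0 = 1 := by
  simp [rayleighSurvival]

lemma rayleighSurvival_mul (lam a x : ℝ) :
    rayleighSurvival lam (a * x) = exp (-(a ^ 2 / (2 * lam)) * x ^ 2) := by
  rw [rayleighSurvival]
  ring_nf

lemma lt_inv_mul_sqrt_max_sub_iff {a t τ : ℝ} (κ : ℝ) (ha : 0 < a) (ht : 0 ≤ t) (hτ : 0 ≤ τ) :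
    τ < a⁻¹ * √(max (t ^ 2 - a ^ 2 * κ ^ 2) 0) ↔ a * √(τ ^ 2 + κ ^ 2) < t := by
  have hsq : a * √(τ ^ 2 + κ ^ 2) = √(a ^ 2 * (τ ^ 2 + κ ^ 2)) := by
    rw [sqrt_mul (sq_nonneg a), sqrt_sq ha.le]
  rw [lt_inv_mul_iff₀ ha, lt_sqrt (by positivity), lt_max_iff,
    or_iff_left (not_lt.mpr (sq_nonneg _)), hsq, sqrt_lt (by positivity) ht]
  constructor <;> intro h <;> linarith

section

variable {Ω : Type*} [MeasurableSpace Ω] {μ : Measure Ω} {ξ : Ω → ℝ}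

lemma measure_lt_eq_ofReal_of_measure_le [IsProbabilityMeasure μ] (hξ : Measurable ξ)
    {x p : ℝ} (hp : p ≤ 1) (h : μ {ω | ξ ω ≤ x} = ENNReal.ofReal (1 - p)) :
    μ {ω | x < ξ ω} = ENNReal.ofReal p := by
  have hcompl : {ω | x < ξ ω} = {ω | ξ ω ≤ x}ᶜ := by ext; simp
  have hmeas : MeasurableSet {ω | ξ ω ≤ x} := hξ measurableSet_Iic
  rw [hcompl, prob_compl_eq_one_sub hmeas, h, ← ENNReal.ofReal_one,
    ← ENNReal.ofReal_sub _ (by linarith), sub_sub_cancel]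

lemma measure_le_eq_ofReal_of_continuousWithinAt {G : ℝ → ℝ} {x : ℝ}
    (hG : ContinuousWithinAt G (Iio x) x)
    (htail : ∀ᶠ y in 𝓝[<] x, μ {ω | y < ξ ω} = ENNReal.ofReal (G y))
    (hx : μ {ω | x < ξ ω} = ENNReal.ofReal (G x)) :
    μ {ω | x ≤ ξ ω} = ENNReal.ofReal (G x) := by
  refine le_antisymm (ge_of_tendsto ((ENNReal.continuous_ofReal.tendsto _).comp hG) ?_) ?_
  · filter_upwards [htail, self_mem_nhdsWithin] with y hy hyx
    rw [Function.comp_apply, ← hy]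
    exact measure_mono fun ω (hω : x ≤ ξ ω) => lt_of_lt_of_le hyx hω
  · rw [← hx]
    exact measure_mono fun ω (hω : x < ξ ω) => hω.le

end

section Rayleigh

variable {Ω : Type*} [MeasurableSpace Ω] {μ : Measure Ω} [IsProbabilityMeasure μ] {ξ : Ω → ℝ}
  {lam : ℝ} (hlam : 0 ≤ lam) (hξ : Measurable ξ)
  (hcdf : ∀ x, 0 ≤ x → μ {ω | ξ ω ≤ x} = ENNReal.ofReal (1 - rayleighSurvival lam x))
include hlam hξ hcdf

lemma measure_lt_of_rayleigh {x : ℝ} (hx : 0 ≤ x) :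
    μ {ω | x < ξ ω} = ENNReal.ofReal (rayleighSurvival lam x) :=
  measure_lt_eq_ofReal_of_measure_le hξ (rayleighSurvival_le_one hlam x) (hcdf x hx)

lemma measure_le_of_rayleigh {x : ℝ} (hx : 0 ≤ x) :
    μ {ω | x ≤ ξ ω} = ENNReal.ofReal (rayleighSurvival lam x) := by
  have hlt := measure_lt_of_rayleigh hlam hξ hcdf hx
  rcases hx.eq_or_lt with rfl | hpos
  · rw [rayleighSurvival_zero, ENNReal.ofReal_one] at hlt ⊢
    exact le_antisymm prob_le_one
      (hlt.symm.le.trans (measure_mono fun ω (hω : 0 < ξ ω) => hω.le))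
  · refine measure_le_eq_ofReal_of_continuousWithinAt
      (continuous_rayleighSurvival lam).continuousWithinAt ?_ hlt
    filter_upwards [Ioo_mem_nhdsLT hpos] with y hy
    exact measure_lt_of_rayleigh hlam hξ hcdf hy.1.le

lemma measure_le_inter_lt_of_rayleigh {b s : ℝ} (hb : 0 ≤ b) (hs : 0 ≤ s) :
    μ ({ω | b ≤ ξ ω} ∩ {ω | s < ξ ω}) = ENNReal.ofReal (rayleighSurvival lam (max s b)) := by
  rcases le_or_gt b s with hbs | hsb
  · have hsub : {ω | b ≤ ξ ω} ∩ {ω | s < ξ ω} = {ω | s < ξ ω} :=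
      inter_eq_right.mpr fun ω (hω : s < ξ ω) => hbs.trans hω.le
    rw [hsub, max_eq_left hbs, measure_lt_of_rayleigh hlam hξ hcdf hs]
  · have hsub : {ω | b ≤ ξ ω} ∩ {ω | s < ξ ω} = {ω | b ≤ ξ ω} :=
      inter_eq_left.mpr fun ω (hω : b ≤ ξ ω) => hsb.trans_le hω
    rw [hsub, max_eq_right hsb.le, measure_le_of_rayleigh hlam hξ hcdf hb]

end Rayleigh

/-- Equation (16): tail of the conditional length T₂ of the successive
excursion above γ₂ given an excursion above γ₁ of length ≥ τ₁. -/
theorem cond_tail_T2 {Ω : Type*} [MeasureSpace Ω]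
    [IsProbabilityMeasure (ℙ : Measure Ω)]
    (lam2 γ₁ γ₂ τ₁ : ℝ) (hlam2 : 0 < lam2) (hγ₁ : 0 < γ₁) (hγ₂ : γ₁ ≤ γ₂) (hτ₁ : 0 ≤ τ₁)
    (ξ : Ω → ℝ) (hmeas : Measurable ξ)
    (hcdf : ∀ x : ℝ, 0 ≤ x →
      ℙ {ω | ξ ω ≤ x} = ENNReal.ofReal (1 - Real.exp (-(x ^ 2) / (2 * lam2))))
    (T₂ : Ω → ℝ)
    (hT₂ : ∀ ω, T₂ ω =
      2 / (γ₁ * lam2) * Real.sqrt (max ((ξ ω) ^ 2 - 2 * γ₁ * lam2 * (γ₂ - γ₁)) 0))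
    (V τ₁star : ℝ) (hV : V = γ₁ ^ 2 * lam2 / 8)
    (hτ₁star : τ₁star = Real.sqrt (8 * (γ₂ - γ₁) / (γ₁ * lam2))) :
    ∀ τ : ℝ, 0 ≤ τ →
      ℙ[{ω | T₂ ω > τ} | {ω | γ₁ * lam2 * τ₁ / 2 ≤ ξ ω}] =
        ENNReal.ofReal
          (Real.exp (-V * max (τ ^ 2 + τ₁star ^ 2) (τ₁ ^ 2)) /
            Real.exp (-V * τ₁ ^ 2)) := by
  intro τ hτ
  set a := γ₁ * lam2 / 2
  have ha : 0 < a := by positivity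
  have hV' : V = a ^ 2 / (2 * lam2) := by rw [hV]; field_simp; ring
  have hT : ∀ ω, T₂ ω = a⁻¹ * √(max (ξ ω ^ 2 - a ^ 2 * τ₁star ^ 2) 0) := by
    intro ω
    rw [hT₂, hτ₁star, sq_sqrt (div_nonneg (by linarith) (by positivity)), inv_div]
    congr 4
    field_simp
    ring
  have hb : γ₁ * lam2 * τ₁ / 2 = a * τ₁ := by ring
  have hb0 : 0 ≤ a * τ₁ := by positivity
  have hevent : {ω | a * τ₁ ≤ ξ ω} ∩ {ω | T₂ ω > τ} =
      {ω | a * τ₁ ≤ ξ ω} ∩ {ω | a * √(τ ^ 2 + τ₁star ^ 2) < ξ ω} := by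
    ext ω
    simp only [mem_inter_iff, mem_ofPred_eq, gt_iff_lt, hT, and_congr_right_iff]
    exact fun h => lt_inv_mul_sqrt_max_sub_iff τ₁star ha (hb0.trans h) hτ
  have hmax : max (a * √(τ ^ 2 + τ₁star ^ 2)) (a * τ₁) =
      a * √(max (τ ^ 2 + τ₁star ^ 2) (τ₁ ^ 2)) := by
    rw [← mul_max_of_nonneg _ _ ha.le, Real.sqrt_monotone.map_max, sqrt_sq hτ₁]
  have hB : MeasurableSet {ω | a * τ₁ ≤ ξ ω} := hmeas measurableSet_Ici
  rw [hb, cond_apply hB, hevent,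
    measure_le_inter_lt_of_rayleigh hlam2.le hmeas hcdf hb0 (by positivity), hmax,
    measure_le_of_rayleigh hlam2.le hmeas hcdf hb0, rayleighSurvival_mul, rayleighSurvival_mul,
    sq_sqrt (le_max_of_le_right (sq_nonneg _)), ← hV',
    ENNReal.ofReal_div_of_pos (exp_pos _), div_eq_mul_inv, mul_comm]
end

section
/- Let ξ be Rayleigh with parameter √λ₂, γ₂ ≥ γ₁ > 0, V = γ₁²λ₂/8, τ₁* = √(8(γ₂−γ₁)/(γ₁λ₂)), and T₂ = (2/(γ₁λ₂))·√(max{ξ² − 2γ₁λ₂(γ₂−γ₁), 0}) (no conditioning, i.e., τ₁ = 0). Then E[T₂] = exp(−V(τ₁*)²)·√(π/(4V)). -/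
open MeasureTheory ProbabilityTheory Real

/-!
Since `ξ > 0` almost surely, `t < T₂` exactly when `ξ² > 2γ₁λ₂(γ₂ - γ₁) + (γ₁λ₂t/2)²`, so the
Rayleigh tail gives `ℙ(T₂ > t) = exp(-V τ₁*²) · exp(-V t²)`: a Gaussian tail. The expectation
then follows from the layer-cake formula and `∫₀^∞ exp(-V t²) dt = √(π/(4V))`.
-/

theorem integral_eq_of_meas_lt_eq_gaussian_tail {Ω : Type*} [MeasurableSpace Ω]
    {μ : Measure Ω} {X : Ω → ℝ} (hXm : AEMeasurable X μ) (hX : 0 ≤ᵐ[μ] X) {K V : ℝ}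
    (hK : 0 ≤ K) (hV : 0 < V)
    (htail : ∀ t > 0, μ {ω | t < X ω} = ENNReal.ofReal (K * exp (-V * t ^ 2))) :
    ∫ ω, X ω ∂μ = K * √(π / (4 * V)) := by
  have hint : IntegrableOn (fun t : ℝ => K * exp (-V * t ^ 2)) (Set.Ioi 0) :=
    (integrable_exp_neg_mul_sq hV).integrableOn.const_mul K
  have hnn : 0 ≤ᵐ[volume.restrict (Set.Ioi (0 : ℝ))] fun t => K * exp (-V * t ^ 2) :=
    ae_of_all _ fun t => by positivity
  rw [integral_eq_lintegral_of_nonneg_ae hX hXm.aestronglyMeasurable,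
    lintegral_eq_lintegral_meas_lt μ hX hXm,
    setLIntegral_congr_fun measurableSet_Ioi htail,
    ← ofReal_integral_eq_lintegral_ofReal hint hnn, integral_const_mul, integral_gaussian_Ioi,
    ENNReal.toReal_ofReal (by positivity), mul_comm 4, ← div_div, sqrt_div' _ zero_le_four,
    show √(4 : ℝ) = 2 by rw [sqrt_eq_iff_eq_sq] <;> norm_num]

theorem measure_lt_eq_exp_of_cdf {Ω : Type*} [MeasurableSpace Ω] {μ : Measure Ω}
    [IsProbabilityMeasure μ] {ξ : Ω → ℝ} (hξ : Measurable ξ) {σsq : ℝ} (hσsq : 0 ≤ σsq)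
    (hcdf : ∀ x : ℝ, 0 ≤ x → μ {ω | ξ ω ≤ x} = ENNReal.ofReal (1 - exp (-(x ^ 2) / (2 * σsq))))
    {s : ℝ} (hs : 0 ≤ s) :
    μ {ω | s < ξ ω} = ENNReal.ofReal (exp (-(s ^ 2) / (2 * σsq))) := by
  have hle : exp (-(s ^ 2) / (2 * σsq)) ≤ 1 :=
    exp_le_one_iff.mpr (div_nonpos_of_nonpos_of_nonneg (by linarith [sq_nonneg s]) (by linarith))
  have hcompl : {ω | s < ξ ω} = {ω | ξ ω ≤ s}ᶜ := by ext; simp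
  rw [hcompl, prob_compl_eq_one_sub (measurableSet_le hξ measurable_const), hcdf s hs,
    ← ENNReal.ofReal_one, ← ENNReal.ofReal_sub _ (sub_nonneg.mpr hle), sub_sub_cancel]

theorem lt_mul_sqrt_max_sub_iff {a c t x : ℝ} (hc : 0 < c) (ht : 0 ≤ t) (hx : 0 < x) :
    t < c * √(max (x ^ 2 - a) 0) ↔ √(a + (t / c) ^ 2) < x := by
  rw [← div_lt_iff₀' hc, lt_sqrt (div_nonneg ht hc.le), lt_max_iff,
    or_iff_left (sq_nonneg _).not_gt, sqrt_lt' hx, lt_sub_iff_add_lt']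

/-- The unconditional expected length of the successive excursion above γ₂:
E[T₂] = exp(−V(τ₁*)²)·√(π/(4V)). -/
theorem expected_successive_excursion_length {Ω : Type*} [MeasureSpace Ω]
    [IsProbabilityMeasure (ℙ : Measure Ω)]
    (lam2 γ₁ γ₂ : ℝ) (hlam2 : 0 < lam2) (hγ₁ : 0 < γ₁) (hγ₂ : γ₁ ≤ γ₂)
    (ξ : Ω → ℝ) (hmeas : Measurable ξ)
    (hcdf : ∀ x : ℝ, 0 ≤ x →
      ℙ {ω | ξ ω ≤ x} = ENNReal.ofReal (1 - Real.exp (-(x ^ 2) / (2 * lam2))))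
    (T₂ : Ω → ℝ)
    (hT₂ : ∀ ω, T₂ ω =
      2 / (γ₁ * lam2) * Real.sqrt (max ((ξ ω) ^ 2 - 2 * γ₁ * lam2 * (γ₂ - γ₁)) 0))
    (V τ₁star : ℝ) (hV : V = γ₁ ^ 2 * lam2 / 8)
    (hτ₁star : τ₁star = Real.sqrt (8 * (γ₂ - γ₁) / (γ₁ * lam2))) :
    ∫ ω, T₂ ω ∂ℙ = Real.exp (-V * τ₁star ^ 2) * Real.sqrt (Real.pi / (4 * V)) := by
  have hc : 0 < 2 / (γ₁ * lam2) := by positivity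
  have hξpos : ∀ᵐ ω ∂ℙ, 0 < ξ ω := by
    rw [ae_iff]
    simpa using hcdf 0 le_rfl
  have hT₂m : Measurable T₂ := by
    rw [funext hT₂]
    fun_prop
  refine integral_eq_of_meas_lt_eq_gaussian_tail hT₂m.aemeasurable
    (ae_of_all _ fun ω => by rw [hT₂]; positivity) (exp_pos _).le (by rw [hV]; positivity)
    fun t ht => ?_
  have hevent : {ω | t < T₂ ω} =ᵐ[ℙ]
      {ω | √(2 * γ₁ * lam2 * (γ₂ - γ₁) + (t / (2 / (γ₁ * lam2))) ^ 2) < ξ ω} := by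
    filter_upwards [hξpos] with ω hω
    change (t < T₂ ω) = _
    rw [hT₂]
    exact propext (lt_mul_sqrt_max_sub_iff hc ht.le hω)
  have hδ : 0 ≤ γ₂ - γ₁ := sub_nonneg.mpr hγ₂
  rw [measure_congr hevent, measure_lt_eq_exp_of_cdf hmeas hlam2.le hcdf (sqrt_nonneg _),
    ← exp_add, sq_sqrt (by positivity), hτ₁star, sq_sqrt (by positivity), hV]
  congr 2
  field_simp
  ring
end
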